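/- arXiv:1902.02698 — 4 statements merged into one kernel-verified Lean document; each statement's English description precedes it below -/
import Mathlib

section
/- Let ⟨U, ⊕⟩ be a monotone commutative monoid with U ⊆ ℝ. Suppose the ranking function has the form r(θ) = ⊕_{F ∈ E} w_F(θ[x_F]) where E is a finite collection of subsets of the variable set V, x_F = F, and each w_F maps valuations over F to U. Let T ⊆ V and suppose K ⊆ V is such that every F ∈ E satisfies either F ⊆ T ∪ K or F ∩ (T \ K) = ∅ (i.e., each hyperedge either lies entirely inside T ∪ K or avoids T \ K). Then r is (T \ K)-decomposable conditioned on K. -/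
open Classical

/-- Combine a valuation over `S` with a valuation over its complement into a total valuation. -/
noncomputable def combine {V D : Type*} (S : Set V) (θ : S → D)
    (φ : {x : V // x ∉ S} → D) : V → D :=
  fun x => if h : x ∈ S then θ ⟨x, h⟩ else φ ⟨x, h⟩

/-- A ranking function `r` over variables `V` is `S`-decomposable if there is a total
preorder `ge` on valuations over `S` such that `ge θ₁ θ₂` implies
`r (φ ∘ θ₁) ≥ r (φ ∘ θ₂)` for every valuation `φ` over `V \ S`. -/
def Decomposable {V D : Type*} (S : Set V) (r : (V → D) → ℝ) : Prop :=
  ∃ ge : (S → D) → (S → D) → Prop,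
    (∀ a, ge a a) ∧
    (∀ a b c, ge a b → ge b c → ge a c) ∧
    (∀ a b, ge a b ∨ ge b a) ∧
    (∀ (φ : {x : V // x ∉ S} → D) (θ₁ θ₂ : S → D),
      ge θ₁ θ₂ → r (combine S θ₁ φ) ≥ r (combine S θ₂ φ))

/-- `r` is `S`-decomposable conditioned on `K`: for every valuation `π` over `K`,
the ranking function `φ ↦ r (π ∘ φ)` on valuations over `V \ K` is `S`-decomposable. -/
def CondDecomposable {V D : Type*} (S K : Set V) (r : (V → D) → ℝ) : Prop :=
  ∀ π : K → D,
    Decomposable {x : {x : V // x ∉ K} | (x : V) ∈ S}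
      (fun φ : {x : V // x ∉ K} → D => r (combine K π φ))

/-- A monotone tuple-based ranking function `r θ = ⊕_{F ∈ E} w_F (θ[x_F])` is
`(T \ K)`-decomposable conditioned on `K` provided every hyperedge either lies
inside `T ∪ K` or avoids `T \ K`. -/
theorem stmt2 {V D : Type*} (ι : Type*) [Fintype ι]
    (op : ℝ → ℝ → ℝ) (e : ℝ)
    (hcomm : ∀ a b, op a b = op b a)
    (hassoc : ∀ a b c, op (op a b) c = op a (op b c))
    (hid : ∀ a, op e a = a)
    (hmono : ∀ a b c, a ≥ b → op a c ≥ op b c)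
    (edge : ι → Set V) (w : ι → (V → D) → ℝ)
    (hw : ∀ i, ∀ θ θ' : V → D, (∀ x ∈ edge i, θ x = θ' x) → w i θ = w i θ')
    (r : (V → D) → ℝ)
    (hr : ∀ θ, r θ =
      @Finset.fold ι ℝ op ⟨hcomm⟩ ⟨hassoc⟩ e (fun i => w i θ) Finset.univ)
    (T K : Set V)
    (hcover : ∀ i, edge i ⊆ T ∪ K ∨ edge i ∩ (T \ K) = ∅) :
    CondDecomposable (T \ K) K r := by
  classical
  intro π
  set S : Set {x : V // x ∉ K} := {x : {x : V // x ∉ K} | (x : V) ∈ T \ K} with hSdef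
  by_cases hne : Nonempty ({x : {x : V // x ∉ K} // x ∉ S} → D)
  · obtain ⟨ψ₀⟩ := hne
    -- total valuation built from θ (on T \ K) and ψ (on the rest, outside K)
    set val : (S → D) → ({x : {x : V // x ∉ K} // x ∉ S} → D) → V → D :=
      fun θ ψ => combine K π (combine S θ ψ) with hval
    have hvalK : ∀ θ ψ x (h : x ∈ K), val θ ψ x = π ⟨x, h⟩ := by
      intro θ ψ x h; simp [hval, combine, h]
    have hvalS : ∀ θ ψ x (h : x ∉ K) (h2 : x ∈ T \ K),
        val θ ψ x = θ ⟨⟨x, h⟩, h2⟩ := by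
      intro θ ψ x h h2
      simp only [hval, combine, dif_neg h]
      rw [dif_pos (show (⟨x, h⟩ : {x : V // x ∉ K}) ∈ S from h2)]
    have hvalψ : ∀ θ ψ x (h : x ∉ K) (h2 : ¬ x ∈ T \ K),
        val θ ψ x = ψ ⟨⟨x, h⟩, h2⟩ := by
      intro θ ψ x h h2
      simp only [hval, combine, dif_neg h]
      rw [dif_neg (show ¬ (⟨x, h⟩ : {x : V // x ∉ K}) ∈ S from h2)]
    -- w i on "inside" edges depends only on θ
    have hwA : ∀ i, edge i ⊆ T ∪ K → ∀ θ ψ ψ', w i (val θ ψ) = w i (val θ ψ') := by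
      intro i hi θ ψ ψ'
      apply hw
      intro x hx
      by_cases hK : x ∈ K
      · rw [hvalK θ ψ x hK, hvalK θ ψ' x hK]
      · have hT : x ∈ T := by rcases hi hx with h | h; exacts [h, absurd h hK]
        have h2 : x ∈ T \ K := ⟨hT, hK⟩
        rw [hvalS θ ψ x hK h2, hvalS θ ψ' x hK h2]
    -- w i on "outside" edges depends only on ψ
    have hwB : ∀ i, edge i ∩ (T \ K) = ∅ → ∀ θ θ' ψ, w i (val θ ψ) = w i (val θ' ψ) := by
      intro i hi θ θ' ψ
      apply hw
      intro x hx
      by_cases hK : x ∈ K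
      · rw [hvalK θ ψ x hK, hvalK θ' ψ x hK]
      · have h2 : ¬ x ∈ T \ K := by
          intro h
          exact absurd (Set.mem_inter hx h) (by rw [hi]; exact fun h => h)
        rw [hvalψ θ ψ x hK h2, hvalψ θ' ψ x hK h2]
    set sA : Finset ι := Finset.univ.filter (fun i => edge i ⊆ T ∪ K) with hsA
    set sB : Finset ι := Finset.univ.filter (fun i => ¬ edge i ⊆ T ∪ K) with hsB
    have hdisj : Disjoint sA sB := by
      simp [hsA, hsB, Finset.disjoint_filter]
    have huniv : Finset.univ = sA.disjUnion sB hdisj := by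
      ext i
      simp [hsA, hsB]
      tauto
    have hcomm' : Std.Commutative op := ⟨hcomm⟩
    have hassoc' : Std.Associative op := ⟨hassoc⟩
    set A : (S → D) → ℝ :=
      fun θ => @Finset.fold ι ℝ op hcomm' hassoc' e (fun i => w i (val θ ψ₀)) sA with hA
    -- key decomposition of r
    have key : ∀ θ ψ, r (val θ ψ) =
        op (A θ) (@Finset.fold ι ℝ op hcomm' hassoc' e (fun i => w i (val θ ψ)) sB) := by
      intro θ ψ
      have hsplit : ∀ (f : ι → ℝ),
          Finset.fold op e f (sA.disjUnion sB hdisj) =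
          op (Finset.fold op e f sA) (Finset.fold op e f sB) := by
        intro f
        have h := Finset.fold_disjUnion (op := op) (b₁ := e) (b₂ := e) (f := f) hdisj
        rwa [hid] at h
      rw [hr, huniv, hsplit]
      congr 1
      apply Finset.fold_congr
      intro i hi
      rw [hsA, Finset.mem_filter] at hi
      exact hwA i hi.2 θ ψ ψ₀
    -- B-part is θ-independent
    have keyB : ∀ θ θ' ψ,
        @Finset.fold ι ℝ op hcomm' hassoc' e (fun i => w i (val θ ψ)) sB =
        @Finset.fold ι ℝ op hcomm' hassoc' e (fun i => w i (val θ' ψ)) sB := by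
      intro θ θ' ψ
      apply Finset.fold_congr
      intro i hi
      rw [hsB, Finset.mem_filter] at hi
      rcases hcover i with h | h
      · exact absurd h hi.2
      · exact hwB i h θ θ' ψ
    refine ⟨fun θ₁ θ₂ => A θ₁ ≥ A θ₂, fun a => le_refl _, fun a b c hab hbc => le_trans hbc hab,
        fun a b => le_total (A b) (A a), ?_⟩
    intro ψ θ₁ θ₂ hge
    have h1 := key θ₁ ψ
    have h2 := key θ₂ ψ
    show r (combine K π (combine S θ₁ ψ)) ≥ r (combine K π (combine S θ₂ ψ))
    rw [show combine K π (combine S θ₁ ψ) = val θ₁ ψ from rfl,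
        show combine K π (combine S θ₂ ψ) = val θ₂ ψ from rfl, h1, h2,
        keyB θ₂ θ₁ ψ]
    exact hmono _ _ _ hge
  · refine ⟨fun _ _ => True, fun _ => trivial, fun _ _ _ _ _ => trivial,
      fun _ _ => Or.inl trivial, ?_⟩
    intro φ θ₁ θ₂ _
    exact absurd ⟨φ⟩ hne
end

section
/- Consider variables x1, x2, y1, y2 with domain {-1, 1} and the ranking function r(θ) = θ(x1)·θ(y1) + θ(x2)·θ(y2) (the inner product of (x1,x2) and (y1,y2) viewed as ±1 vectors). Then r is not {x1, x2}-decomposable: there exists no total preorder ⪰ on valuations over {x1, x2} such that for every valuation φ over {y1, y2} and all valuations θ1, θ2 over {x1, x2}, θ1 ⪰ θ2 implies r(φ ∘ θ1) ≥ r(φ ∘ θ2). -/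
open Classical

/-- The domain `{-1, 1}`. -/
def PMOne : Type := {z : ℤ // z = -1 ∨ z = 1}

/-- The inner-product ranking function `r(θ) = θ(x₁)·θ(y₁) + θ(x₂)·θ(y₂)` on
variables `x₁ = 0, x₂ = 1, y₁ = 2, y₂ = 3` with domain `{-1,1}` is not
`{x₁, x₂}`-decomposable. -/
theorem stmt3 :
    ¬ Decomposable ({0, 1} : Set (Fin 4))
      (fun θ : Fin 4 → PMOne =>
        (((θ 0).1 * (θ 2).1 + (θ 1).1 * (θ 3).1 : ℤ) : ℝ)) := by
  rintro ⟨ge, _, _, htot, hmono⟩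
  let one : PMOne := ⟨1, Or.inr rfl⟩
  let neg : PMOne := ⟨-1, Or.inl rfl⟩
  have h0 : (0 : Fin 4) ∈ ({0, 1} : Set (Fin 4)) := Or.inl rfl
  have h1 : (1 : Fin 4) ∈ ({0, 1} : Set (Fin 4)) := Or.inr rfl
  have h2 : (2 : Fin 4) ∉ ({0, 1} : Set (Fin 4)) := by
    rintro (h | h) <;> exact absurd h (by decide)
  have h3 : (3 : Fin 4) ∉ ({0, 1} : Set (Fin 4)) := by
    rintro (h | h) <;> exact absurd h (by decide)
  have key : ∀ (θ : ({0, 1} : Set (Fin 4)) → PMOne)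
      (φ : {x : Fin 4 // x ∉ ({0, 1} : Set (Fin 4))} → PMOne),
      combine ({0, 1} : Set (Fin 4)) θ φ 0 = θ ⟨0, h0⟩ ∧
      combine ({0, 1} : Set (Fin 4)) θ φ 1 = θ ⟨1, h1⟩ ∧
      combine ({0, 1} : Set (Fin 4)) θ φ 2 = φ ⟨2, h2⟩ ∧
      combine ({0, 1} : Set (Fin 4)) θ φ 3 = φ ⟨3, h3⟩ := by
    intro θ φ
    refine ⟨dif_pos h0, dif_pos h1, dif_neg h2, dif_neg h3⟩
  rcases htot (fun _ => one) (fun _ => neg) with h | h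
  · have := hmono (fun _ => neg) (fun _ => one) (fun _ => neg) h
    simp only [(key _ _).1, (key _ _).2.1, (key _ _).2.2.1, (key _ _).2.2.2] at this
    norm_num [one, neg] at this
  · have := hmono (fun _ => one) (fun _ => neg) (fun _ => one) h
    simp only [(key _ _).1, (key _ _).2.1, (key _ _).2.2.1, (key _ _).2.2.2] at this
    norm_num [one, neg] at this
end

section
/- Let r be a ranking function over variables V that is S_i-decomposable conditioned on K for each i = 1, ..., m, where S_1, ..., S_m are pairwise disjoint subsets of V \ K. Let θ = θ_1 ∘ ... ∘ θ_m and θ' = θ'_1 ∘ ... ∘ θ'_m be two valuations over S_1 ∪ ... ∪ S_m (with θ_i, θ'_i over S_i) agreeing with a common valuation w over K. If θ'_i ⪰_i θ_i in the decomposition order of each S_i for every i, then for every valuation φ over V \ (K ∪ S_1 ∪ ... ∪ S_m), r(φ ∘ w ∘ θ'_1 ∘ ... ∘ θ'_m) ≥ r(φ ∘ w ∘ θ_1 ∘ ... ∘ θ_m). -/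
/-- Restriction of a total valuation to a set of variables. -/
def Res {V D : Type*} (S : Set V) (α : V → D) : S → D := fun x => α x.1

/-- Chain of conditioned decomposability: if `r` is `S i`-decomposable
conditioned on `K` (with decomposition order `ge i`) for pairwise disjoint
blocks `S 1, …, S m` disjoint from `K`, and `θ'` block-wise dominates `θ`
(both agreeing with `w` on `K` and agreeing outside `K ∪ ⋃ S i`), then
`r θ' ≥ r θ`. -/
theorem stmt12 {V D : Type*} (r : (V → D) → ℝ) (K : Set V) (m : ℕ)
    (S : Fin m → Set V)
    (hdisjK : ∀ i, Disjoint (S i) K)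
    (hdisj : ∀ i j, i ≠ j → Disjoint (S i) (S j))
    (w : V → D)
    (ge : ∀ i : Fin m, (↥(S i) → D) → (↥(S i) → D) → Prop)
    (hrefl : ∀ i a, ge i a a)
    (htrans : ∀ i a b c, ge i a b → ge i b c → ge i a c)
    (htotal : ∀ i a b, ge i a b ∨ ge i b a)
    (hdec : ∀ i : Fin m, ∀ α β : V → D,
      (∀ x, x ∉ S i → α x = β x) → (∀ x ∈ K, α x = w x) →
      ge i (Res (S i) α) (Res (S i) β) → r α ≥ r β) :
    ∀ θ θ' : V → D,
      (∀ x, (∀ i, x ∉ S i) → θ x = θ' x) →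
      (∀ x ∈ K, θ x = w x) →
      (∀ i, ge i (Res (S i) θ') (Res (S i) θ)) →
      r θ' ≥ r θ := by
  intro θ θ' hout hK hge
  classical
  -- hybrid valuation: θ' on blocks with index < k, θ elsewhere
  set f : ℕ → V → D := fun k x =>
    if ∃ i : Fin m, (i : ℕ) < k ∧ x ∈ S i then θ' x else θ x with hf
  have hf0 : f 0 = θ := by
    funext x; simp [hf]
  have hfm : f m = θ' := by
    funext x
    simp only [hf]
    split
    · rfl
    · rename_i h
      push_neg at h
      exact hout x fun i => h i i.2
  have hKi : ∀ x ∈ K, ∀ i : Fin m, x ∉ S i := by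
    intro x hx i hxi
    exact (hdisjK i).ne_of_mem hxi hx rfl
  have key : ∀ k : Fin m, r (f ((k : ℕ) + 1)) ≥ r (f k) := by
    intro k
    apply hdec k
    · intro x hx
      simp only [hf]
      congr 1
      apply propext
      constructor <;> rintro ⟨i, hi, hxi⟩
      · refine ⟨i, ?_, hxi⟩
        rcases Nat.lt_succ_iff_lt_or_eq.mp hi with h | h
        · exact h
        · exfalso; apply hx
          have : i = k := Fin.ext h
          rwa [this] at hxi
      · exact ⟨i, Nat.lt_succ_of_lt hi, hxi⟩
    · intro x hx
      simp only [hf]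
      rw [if_neg, hK x hx]
      rintro ⟨i, _, hxi⟩
      exact hKi x hx i hxi
    · have h1 : Res (S k) (f ((k : ℕ) + 1)) = Res (S k) θ' := by
        funext x
        simp only [Res, hf]
        rw [if_pos ⟨k, Nat.lt_succ_self _, x.2⟩]
      have h2 : Res (S k) (f (k : ℕ)) = Res (S k) θ := by
        funext x
        simp only [Res, hf]
        rw [if_neg]
        rintro ⟨i, hi, hxi⟩
        have hne : i ≠ k := by
          intro h; rw [h] at hi; exact lt_irrefl _ hi
        exact (hdisj i k hne).ne_of_mem hxi x.2 rfl
      rw [h1, h2]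
      exact hge k
  have main : ∀ k : ℕ, k ≤ m → r (f k) ≥ r θ := by
    intro k
    induction k with
    | zero => intro _; rw [hf0]
    | succ n ih =>
      intro hn
      have hnm : n < m := hn
      have := key ⟨n, hnm⟩
      exact le_trans (ih (Nat.le_of_lt hnm)) this
  have := main m le_rfl
  rwa [hfm] at this
end

section
/- For n ≥ 2, define vectors in ℕ⁴: p_{i,j} = (w1(i), w2(i), w3(j), w4(j)) where w1(i) = i, w2(i) = n - i + 1, w3(j) = n - j + 1, w4(j) = j, for 1 ≤ i, j ≤ n (corresponding to the edge-weight construction for the query R(x,y),S(y,z),T(p,q),U(q,r)). Then the set {p_{i,j} : 1 ≤ i, j ≤ n} has exactly n² elements and is an antichain under the coordinatewise order on ℕ⁴. -/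
/-- The set of vectors `p_{i,j} = (i, n-i+1, n-j+1, j)` for `1 ≤ i, j ≤ n`. -/
def P19 (n : ℕ) : Set (ℕ × ℕ × ℕ × ℕ) :=
  {v | ∃ i j, 1 ≤ i ∧ i ≤ n ∧ 1 ≤ j ∧ j ≤ n ∧ v = (i, n - i + 1, n - j + 1, j)}

lemma P19_eq (n : ℕ) :
    P19 n = (fun p : ℕ × ℕ => (p.1, n - p.1 + 1, n - p.2 + 1, p.2)) ''
      (Finset.Icc 1 n ×ˢ Finset.Icc 1 n : Finset (ℕ × ℕ)) := by
  ext v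
  simp only [P19, Set.mem_setOf_eq, Set.mem_image, Finset.coe_product, Set.mem_prod,
    Finset.coe_Icc, Set.mem_Icc]
  constructor
  · rintro ⟨i, j, h1, h2, h3, h4, rfl⟩
    exact ⟨(i, j), ⟨⟨h1, h2⟩, ⟨h3, h4⟩⟩, rfl⟩
  · rintro ⟨⟨i, j⟩, ⟨⟨h1, h2⟩, ⟨h3, h4⟩⟩, rfl⟩
    exact ⟨i, j, h1, h2, h3, h4, rfl⟩

/-- For `n ≥ 2`, the set `{p_{i,j}}` has exactly `n²` elements and is an
antichain under the coordinatewise order on `ℕ⁴`. -/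
theorem stmt19 (n : ℕ) (hn : 2 ≤ n) :
    (P19 n).ncard = n * n ∧
    ∀ u ∈ P19 n, ∀ v ∈ P19 n, u ≠ v → ¬ u ≤ v := by
  constructor
  · rw [P19_eq]
    rw [Set.ncard_image_of_injective _ (fun a b hab => by
      simp only [Prod.mk.injEq] at hab
      exact Prod.ext hab.1 hab.2.2.2)]
    rw [Set.ncard_coe_finset]
    simp [Nat.card_Icc]
  · rintro u ⟨i, j, hi1, hi2, hj1, hj2, rfl⟩ v ⟨i', j', hi1', hi2', hj1', hj2', rfl⟩ hne hle
    simp only [Prod.le_def] at hle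
    exact hne (by obtain ⟨h1, h2, h3, h4⟩ := hle; simp only [Prod.mk.injEq]; omega)
end
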